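/- arXiv:2309.15491 — 2 statements merged into one kernel-verified Lean document; each statement's English description precedes it below -/
import Mathlib

section
/- Let γ > 0, α ∈ [0,2), N ≥ 1, and let 0 < λ₁ < λ₂ < ⋯ < λ_N be positive reals satisfying √λ_{k+1} − √λ_k ≥ γ(2−α) for 1 ≤ k ≤ N−1. Define the sequence (μ_n)_{n≥1} by μ_n = √λ_N − √λ_{N−(n−1)} for 1 ≤ n ≤ N, μ_n = √λ_N + √λ_{n−N} for N+1 ≤ n ≤ 2N, and μ_n = (√μ_{n−1} + γ λ_N^{−1/4})² for n ≥ 2N+1. Then μ_n ≥ 0 and the sequence is increasing, and for all n ≥ 1 one has √μ_{n+1} − √μ_n ≥ ς λ_N^{−1/4}, where ς = min( γ(2−α)/(2√2), 2√λ₁/(1+√2) ). -/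
open Filter Set

private lemma sqrt_gap_aux (u v g c₁ c₂ : ℝ) (hu : 0 ≤ u) (hg : 0 < g)
    (hguv : g ≤ v - u) (hvc : Real.sqrt v ≤ c₁) (huc : Real.sqrt u ≤ c₂) :
    g / (c₁ + c₂) ≤ Real.sqrt v - Real.sqrt u := by
  have hvpos : 0 < v := by linarith
  have h1 : Real.sqrt u ^ 2 = u := Real.sq_sqrt hu
  have h2 : Real.sqrt v ^ 2 = v := Real.sq_sqrt hvpos.le
  have hsu0 : 0 ≤ Real.sqrt u := Real.sqrt_nonneg u
  have hsv0 : 0 ≤ Real.sqrt v := Real.sqrt_nonneg v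
  have hle : Real.sqrt u ≤ Real.sqrt v := Real.sqrt_le_sqrt (by linarith)
  have hc1 : 0 < c₁ := lt_of_lt_of_le (Real.sqrt_pos.mpr hvpos) hvc
  have hc2 : 0 ≤ c₂ := le_trans hsu0 huc
  rw [div_le_iff₀ (by linarith)]
  nlinarith [mul_nonneg (sub_nonneg.2 hle) (sub_nonneg.2 hvc),
    mul_nonneg (sub_nonneg.2 hle) (sub_nonneg.2 huc)]

/-- **The auxiliary sequence `(μ_n)` built from the eigenvalues fulfils a uniform gap
condition.**  With `μ_n = √λ_N - √λ_{N-(n-1)}` for `1 ≤ n ≤ N`,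
`μ_n = √λ_N + √λ_{n-N}` for `N+1 ≤ n ≤ 2N`, and
`μ_n = (√μ_{n-1} + γ λ_N^{-1/4})²` for `n ≥ 2N+1`, the sequence is nonnegative and
increasing, and `√μ_{n+1} - √μ_n ≥ ς λ_N^{-1/4}` for all `n ≥ 1`, where
`ς = min(γ(2-α)/(2√2), 2√λ₁/(1+√2))`. -/
theorem mu_sequence_gap
    (γ α : ℝ) (hγ : 0 < γ) (hα : α ∈ Ico (0:ℝ) 2)
    (N : ℕ) (hN : 1 ≤ N) (lam : ℕ → ℝ)
    (hpos : 0 < lam 1)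
    (hmono : ∀ k, 1 ≤ k → k < N → lam k < lam (k+1))
    (hgap : ∀ k, 1 ≤ k → k + 1 ≤ N →
      γ * (2 - α) ≤ Real.sqrt (lam (k+1)) - Real.sqrt (lam k))
    (μ : ℕ → ℝ)
    (hμ1 : ∀ n, 1 ≤ n → n ≤ N →
      μ n = Real.sqrt (lam N) - Real.sqrt (lam (N - (n - 1))))
    (hμ2 : ∀ n, N + 1 ≤ n → n ≤ 2 * N →
      μ n = Real.sqrt (lam N) + Real.sqrt (lam (n - N)))
    (hμ3 : ∀ n, 2 * N + 1 ≤ n →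
      μ n = (Real.sqrt (μ (n - 1)) + γ * lam N ^ (-(1/4 : ℝ))) ^ 2) :
    (∀ n, 1 ≤ n → 0 ≤ μ n) ∧
    (∀ n, 1 ≤ n → μ n < μ (n + 1)) ∧
    (∀ n, 1 ≤ n →
      min (γ * (2 - α) / (2 * Real.sqrt 2)) (2 * Real.sqrt (lam 1) / (1 + Real.sqrt 2))
          * lam N ^ (-(1/4 : ℝ)) ≤
        Real.sqrt (μ (n + 1)) - Real.sqrt (μ n)) := by
  obtain ⟨hα0, hα2⟩ := hα
  have hsqrt2_one : (1:ℝ) ≤ Real.sqrt 2 := by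
    rw [show (1:ℝ) = Real.sqrt 1 by simp]
    exact Real.sqrt_le_sqrt (by norm_num)
  -- positivity/monotonicity of lam
  have hlpos : ∀ k, 1 ≤ k → k ≤ N → 0 < lam k := by
    intro k hk1 hkN
    induction k with
    | zero => omega
    | succ m ih =>
      rcases Nat.eq_zero_or_pos m with hm | hm
      · subst hm; exact hpos
      · have h1 := hmono m (by omega) (by omega)
        have h2 := ih (by omega) (by omega)
        linarith
  have hlmono : ∀ i j, 1 ≤ i → i ≤ j → j ≤ N → lam i ≤ lam j := by
    intro i j hi hij hjN
    induction j with
    | zero => omega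
    | succ m ih =>
      rcases Nat.lt_or_ge i (m+1) with h | h
      · have h1 : lam m < lam (m+1) := hmono m (by omega) (by omega)
        have h2 := ih (by omega) (by omega)
        linarith
      · have : i = m + 1 := by omega
        rw [this]
  have hlamN : 0 < lam N := hlpos N hN le_rfl
  have haN : 0 < Real.sqrt (lam N) := Real.sqrt_pos.mpr hlamN
  set s : ℝ := Real.sqrt (Real.sqrt (lam N)) with hs_def
  have hs : 0 < s := Real.sqrt_pos.mpr haN
  have hs4 : s = lam N ^ ((1/4 : ℝ)) := by
    rw [hs_def, Real.sqrt_eq_rpow, Real.sqrt_eq_rpow, ← Real.rpow_mul hlamN.le]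
    norm_num
  have ht : lam N ^ (-(1/4 : ℝ)) = s⁻¹ := by
    rw [hs4, ← Real.rpow_neg_one (lam N ^ ((1/4:ℝ))), ← Real.rpow_mul hlamN.le]
    norm_num
  have htpos : 0 < lam N ^ (-(1/4 : ℝ)) := Real.rpow_pos_of_pos hlamN _
  have hsqrt_le : ∀ k, 1 ≤ k → k ≤ N → Real.sqrt (lam k) ≤ Real.sqrt (lam N) :=
    fun k h1 h2 => Real.sqrt_le_sqrt (hlmono k N h1 h2 le_rfl)
  -- the key gap estimate
  have key : ∀ n, 1 ≤ n →
      min (γ * (2 - α) / (2 * Real.sqrt 2)) (2 * Real.sqrt (lam 1) / (1 + Real.sqrt 2))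
          * lam N ^ (-(1/4 : ℝ)) ≤
        Real.sqrt (μ (n + 1)) - Real.sqrt (μ n) := by
    intro n hn
    rcases lt_or_ge n N with hnN | hnN
    · -- Case A : 1 ≤ n ≤ N-1
      have e1 : μ n = Real.sqrt (lam N) - Real.sqrt (lam (N - n + 1)) := by
        rw [hμ1 n hn (by omega)]
        have h : N - (n - 1) = N - n + 1 := by omega
        rw [h]
      have e2 : μ (n + 1) = Real.sqrt (lam N) - Real.sqrt (lam (N - n)) := by
        rw [hμ1 (n+1) (by omega) (by omega)]
        have h : N - (n + 1 - 1) = N - n := by omega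
        rw [h]
      have hg := hgap (N - n) (by omega) (by omega)
      have hgpos : 0 < γ * (2 - α) := by nlinarith
      have hu0 : 0 ≤ μ n := by
        rw [e1]
        have := hsqrt_le (N - n + 1) (by omega) (by omega)
        linarith
      have hguv : γ * (2 - α) ≤ μ (n+1) - μ n := by rw [e1, e2]; linarith
      have hvc : Real.sqrt (μ (n+1)) ≤ s := by
        rw [hs_def]
        apply Real.sqrt_le_sqrt
        rw [e2]
        have := Real.sqrt_nonneg (lam (N - n))
        linarith
      have huc : Real.sqrt (μ n) ≤ s := by
        rw [hs_def]
        apply Real.sqrt_le_sqrt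
        rw [e1]
        have := Real.sqrt_nonneg (lam (N - n + 1))
        linarith
      have hbd := sqrt_gap_aux (μ n) (μ (n+1)) (γ * (2 - α)) s s hu0 hgpos hguv hvc huc
      refine le_trans ?_ hbd
      rw [ht]
      calc min (γ * (2 - α) / (2 * Real.sqrt 2)) (2 * Real.sqrt (lam 1) / (1 + Real.sqrt 2)) * s⁻¹
            ≤ (γ * (2 - α) / (2 * Real.sqrt 2)) * s⁻¹ :=
          mul_le_mul_of_nonneg_right (min_le_left _ _) (inv_nonneg.mpr hs.le)
        _ ≤ γ * (2 - α) / (s + s) := by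
            rw [← div_eq_mul_inv, div_div]
            apply div_le_div_of_nonneg_left hgpos.le (by linarith)
            nlinarith
    · rcases eq_or_lt_of_le hnN with hEq | hnN'
      · -- Case B : n = N
        subst hEq
        have e1 : μ N = Real.sqrt (lam N) - Real.sqrt (lam 1) := by
          rw [hμ1 N hN le_rfl]
          have h : N - (N - 1) = 1 := by omega
          rw [h]
        have e2 : μ (N + 1) = Real.sqrt (lam N) + Real.sqrt (lam 1) := by
          rw [hμ2 (N+1) le_rfl (by omega)]
          have h : N + 1 - N = 1 := by omega
          rw [h]
        have hb : Real.sqrt (lam 1) ≤ Real.sqrt (lam N) := hsqrt_le 1 le_rfl hN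
        have hbpos : 0 < Real.sqrt (lam 1) := Real.sqrt_pos.mpr hpos
        have hu0 : 0 ≤ μ N := by rw [e1]; linarith
        have hguv : 2 * Real.sqrt (lam 1) ≤ μ (N+1) - μ N := by rw [e1, e2]; ring_nf; linarith
        have hvc : Real.sqrt (μ (N+1)) ≤ Real.sqrt 2 * s := by
          rw [hs_def, ← Real.sqrt_mul (by norm_num : (0:ℝ) ≤ 2)]
          apply Real.sqrt_le_sqrt
          rw [e2]
          linarith
        have huc : Real.sqrt (μ N) ≤ s := by
          rw [hs_def]
          apply Real.sqrt_le_sqrt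
          rw [e1]
          linarith
        have hbd := sqrt_gap_aux (μ N) (μ (N+1)) (2 * Real.sqrt (lam 1))
          (Real.sqrt 2 * s) s hu0 (by linarith) hguv hvc huc
        refine le_trans ?_ hbd
        rw [ht]
        calc min (γ * (2 - α) / (2 * Real.sqrt 2)) (2 * Real.sqrt (lam 1) / (1 + Real.sqrt 2)) * s⁻¹
              ≤ (2 * Real.sqrt (lam 1) / (1 + Real.sqrt 2)) * s⁻¹ :=
            mul_le_mul_of_nonneg_right (min_le_right _ _) (inv_nonneg.mpr hs.le)
          _ = 2 * Real.sqrt (lam 1) / (Real.sqrt 2 * s + s) := by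
              rw [← div_eq_mul_inv, div_div]
              congr 1
              ring
      · rcases lt_or_ge n (2*N) with h2N | h2N
        · -- Case C : N+1 ≤ n ≤ 2N-1
          have e1 : μ n = Real.sqrt (lam N) + Real.sqrt (lam (n - N)) := by
            rw [hμ2 n (by omega) (by omega)]
          have e2 : μ (n + 1) = Real.sqrt (lam N) + Real.sqrt (lam (n - N + 1)) := by
            rw [hμ2 (n+1) (by omega) (by omega)]
            have h : n + 1 - N = n - N + 1 := by omega
            rw [h]
          have hg := hgap (n - N) (by omega) (by omega)
          have hgpos : 0 < γ * (2 - α) := by nlinarith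
          have hu0 : 0 ≤ μ n := by
            rw [e1]
            have := Real.sqrt_nonneg (lam (n - N))
            linarith
          have hguv : γ * (2 - α) ≤ μ (n+1) - μ n := by rw [e1, e2]; linarith
          have hvc : Real.sqrt (μ (n+1)) ≤ Real.sqrt 2 * s := by
            rw [hs_def, ← Real.sqrt_mul (by norm_num : (0:ℝ) ≤ 2)]
            apply Real.sqrt_le_sqrt
            rw [e2]
            have := hsqrt_le (n - N + 1) (by omega) (by omega)
            linarith
          have huc : Real.sqrt (μ n) ≤ Real.sqrt 2 * s := by
            rw [hs_def, ← Real.sqrt_mul (by norm_num : (0:ℝ) ≤ 2)]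
            apply Real.sqrt_le_sqrt
            rw [e1]
            have := hsqrt_le (n - N) (by omega) (by omega)
            linarith
          have hbd := sqrt_gap_aux (μ n) (μ (n+1)) (γ * (2 - α))
            (Real.sqrt 2 * s) (Real.sqrt 2 * s) hu0 hgpos hguv hvc huc
          refine le_trans ?_ hbd
          rw [ht]
          calc min (γ * (2 - α) / (2 * Real.sqrt 2)) (2 * Real.sqrt (lam 1) / (1 + Real.sqrt 2)) * s⁻¹
                ≤ (γ * (2 - α) / (2 * Real.sqrt 2)) * s⁻¹ :=
              mul_le_mul_of_nonneg_right (min_le_left _ _) (inv_nonneg.mpr hs.le)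
            _ = γ * (2 - α) / (Real.sqrt 2 * s + Real.sqrt 2 * s) := by
                rw [← div_eq_mul_inv, div_div]
                congr 1
                ring
        · -- Case D : n ≥ 2N
          have e : μ (n+1) = (Real.sqrt (μ n) + γ * lam N ^ (-(1/4 : ℝ)))^2 := by
            have h := hμ3 (n+1) (by omega)
            simpa using h
          have h0 : 0 ≤ Real.sqrt (μ n) + γ * lam N ^ (-(1/4 : ℝ)) := by
            have := Real.sqrt_nonneg (μ n)
            nlinarith
          rw [e, Real.sqrt_sq h0]
          have hmin : min (γ * (2 - α) / (2 * Real.sqrt 2)) (2 * Real.sqrt (lam 1) / (1 + Real.sqrt 2)) ≤ γ := by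
            refine le_trans (min_le_left _ _) ?_
            rw [div_le_iff₀ (by positivity)]
            nlinarith
          have := mul_le_mul_of_nonneg_right hmin htpos.le
          linarith
  -- nonnegativity
  have hnonneg : ∀ n, 1 ≤ n → 0 ≤ μ n := by
    intro n hn
    rcases le_or_gt n N with h | h
    · rw [hμ1 n hn h]
      have := hsqrt_le (N - (n-1)) (by omega) (by omega)
      linarith
    · rcases le_or_gt n (2*N) with h2 | h2
      · rw [hμ2 n (by omega) h2]
        have h3 := Real.sqrt_nonneg (lam (n - N))
        linarith
      · rw [hμ3 n (by omega)]
        positivity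
  -- positivity of the gap constant
  have hςt : 0 < min (γ * (2 - α) / (2 * Real.sqrt 2)) (2 * Real.sqrt (lam 1) / (1 + Real.sqrt 2))
      * lam N ^ (-(1/4 : ℝ)) := by
    apply mul_pos _ htpos
    apply lt_min
    · apply div_pos (by nlinarith) (by positivity)
    · apply div_pos (by positivity) (by positivity)
  refine ⟨hnonneg, ?_, key⟩
  intro n hn
  have hg := key n hn
  by_contra hcon
  push_neg at hcon
  have : Real.sqrt (μ (n+1)) ≤ Real.sqrt (μ n) := Real.sqrt_le_sqrt hcon
  linarith
end

section
/- Let 0 < a < b < 1. There exists a constant c > 0, depending only on (a,b), such that for all α ∈ [0,1) and all j ≥ 1, the normalized eigenfunctions satisfy ‖Φ_j‖²_{L²(a,b)} ≥ c; in particular ‖Φ_j‖²_{L²(a,b)} ≥ (c/2)(2−α) for all α ∈ [0,1) and j ≥ 1. -/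
open MeasureTheory Filter Set Topology

/-!
Write the eigenvalue equation `-(x^α y')' = λ y` as a first-order system for `y` and its flux
`g = x^α y'`. The energy `Q = x^{-α} g² + λ y² ≥ 0` is nonincreasing (`Q' = -α x^{-α-1} g²`) and
`(x Q)' = (1-α) x^{-α} g² + λ y² ≥ λ y²`, so for `δ ≤ x ≤ η` integration gives
`λ ∫_δ^η y² ≤ η Q(η) ≤ Q(x)`; hence `Q ≥ λ ‖y‖² = λ` on `(0,1)`. Integrating `Q ≥ λ` over the
middle half of `(a,b)` and bounding `∫ x^{-α} g²` there by a Caccioppoli inequality (integration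
by parts against `χ² y` for a cutoff `χ`, then Young's inequality) gives
`λ (b-a)/2 ≤ (3λ + 4M) ‖y‖²_{L²(a,b)}` with `M` bounding `χ'²`. Since `λ ↦ λ/(3λ+4M)` is
increasing and `λ ≥ c₁`, this yields a constant independent of `α` and `j`.
-/

/-- The eigensystem of the degenerate operator `P ϑ = -(x^α ϑ')'` on `L²(0,1)`,
with Dirichlet condition at `x = 1` and boundary condition `BC_α` at `x = 0`
(`ϑ(0) = 0` for `α ∈ [0,1)`, `(x^α ϑ')|_{x=0} = 0` for `α ∈ [1,2)`):
an orthonormal Hilbert basis `Φ` of `L²(0,1)` of eigenfunctions, with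
nondecreasing positive eigenvalues `lam` tending to `+∞`. -/
structure EigenSystem (α : ℝ) (lam : ℕ → ℝ) (Φ : ℕ → ℝ → ℝ) : Prop where
  pos : 0 < lam 0
  mono : Monotone lam
  tendsto_atTop : Tendsto lam atTop atTop
  orthonormal : ∀ i j, (∫ x in Ioo (0:ℝ) 1, Φ i x * Φ j x) = if i = j then 1 else 0
  diff : ∀ j, ∀ x ∈ Ioc (0:ℝ) 1, DifferentiableAt ℝ (Φ j) x
  flux_diff : ∀ j, ∀ x ∈ Ioo (0:ℝ) 1, DifferentiableAt ℝ (fun y => y ^ α * deriv (Φ j) y) x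
  eigen : ∀ j, ∀ x ∈ Ioo (0:ℝ) 1, deriv (fun y => y ^ α * deriv (Φ j) y) x = -(lam j * Φ j x)
  weight_int : ∀ j, IntegrableOn (fun x => x ^ α * (deriv (Φ j) x) ^ 2) (Ioo 0 1)
  bdry_one : ∀ j, Φ j 1 = 0
  bdry_zero_weak : α < 1 → ∀ j, Tendsto (Φ j) (nhdsWithin 0 (Ioi 0)) (nhds 0)
  bdry_zero_strong : 1 ≤ α →
    ∀ j, Tendsto (fun x => x ^ α * deriv (Φ j) x) (nhdsWithin 0 (Ioi 0)) (nhds 0)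
  complete : ∀ f : ℝ → ℝ, MemLp f 2 (volume.restrict (Ioo 0 1)) →
    (∀ j, (∫ x in Ioo (0:ℝ) 1, f x * Φ j x) = 0) → f =ᵐ[volume.restrict (Ioo 0 1)] 0

noncomputable def energy (α L : ℝ) (y g : ℝ → ℝ) (t : ℝ) : ℝ :=
  t ^ (-α) * g t ^ 2 + L * y t ^ 2

theorem energy_nonneg {α L : ℝ} {y g : ℝ → ℝ} (hL : 0 ≤ L) {x : ℝ} (hx : 0 ≤ x) :
    0 ≤ energy α L y g x := by
  have := Real.rpow_nonneg hx (-α)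
  unfold energy
  positivity

theorem neg_two_mul_le_of_mul_eq_one {p q A B : ℝ} (hq : 0 ≤ q) (hpq : p * q = 1) :
    -(2 * A * B) ≤ p * A ^ 2 / 2 + 2 * q * B ^ 2 := by
  have key : p * A ^ 2 / 2 + 2 * q * B ^ 2 + 2 * A * B = q * (p * A + 2 * B) ^ 2 / 2 := by
    linear_combination (-(p * A ^ 2 / 2 + 2 * A * B)) * hpq
  linarith [mul_nonneg hq (sq_nonneg (p * A + 2 * B))]

theorem cross_term_le {α L M t u u' G Y : ℝ} (hα : 0 ≤ α) (hL : 0 ≤ L) (ht : t ∈ Ioc 0 1)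
    (hu : u ^ 2 ≤ 1) (hu' : u' ^ 2 ≤ M) :
    L * u ^ 2 * Y ^ 2 - 2 * u * u' * G * Y ≤
      (L + 2 * M) * Y ^ 2 + u ^ 2 * t ^ (-α) * G ^ 2 / 2 := by
  have hpq : t ^ (-α) * t ^ α = 1 := by rw [← Real.rpow_add ht.1]; simp
  have hq₀ : 0 ≤ t ^ α := Real.rpow_nonneg ht.1.le α
  have hq₁ : t ^ α ≤ 1 := Real.rpow_le_one ht.1.le ht.2 hα
  have young := neg_two_mul_le_of_mul_eq_one (A := u * G) (B := u' * Y) hq₀ hpq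
  nlinarith [mul_nonneg (mul_nonneg hL (sub_nonneg.2 hu)) (sq_nonneg Y),
    mul_nonneg (sub_nonneg.2 hu') (sq_nonneg Y),
    mul_nonneg (mul_nonneg (sub_nonneg.2 hq₁) (sq_nonneg u')) (sq_nonneg Y)]

/-- `-(t^α y')' = L y` on `(0,1)`, written as a first-order system for `y` and its flux
`g = t^α y'`. -/
structure FluxSystem (α L : ℝ) (y g : ℝ → ℝ) : Prop where
  hasDerivAt_fun : ∀ x ∈ Ioo (0:ℝ) 1, HasDerivAt y (x ^ (-α) * g x) x
  hasDerivAt_flux : ∀ x ∈ Ioo (0:ℝ) 1, HasDerivAt g (-(L * y x)) x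

namespace FluxSystem

variable {α L : ℝ} {y g : ℝ → ℝ}

theorem continuousOn_fun (h : FluxSystem α L y g) : ContinuousOn y (Ioo 0 1) :=
  HasDerivAt.continuousOn h.hasDerivAt_fun

theorem continuousOn_flux (h : FluxSystem α L y g) : ContinuousOn g (Ioo 0 1) :=
  HasDerivAt.continuousOn h.hasDerivAt_flux

theorem continuousOn_energy (h : FluxSystem α L y g) :
    ContinuousOn (energy α L y g) (Ioo 0 1) :=
  ((continuousOn_id.rpow_const fun _ hx => Or.inl hx.1.ne').mul (h.continuousOn_flux.pow 2)).add
    (continuousOn_const.mul (h.continuousOn_fun.pow 2))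

theorem hasDerivAt_energy (h : FluxSystem α L y g) {x : ℝ} (hx : x ∈ Ioo (0:ℝ) 1) :
    HasDerivAt (energy α L y g) (-α * x ^ (-α - 1) * g x ^ 2) x :=
  (((Real.hasDerivAt_rpow_const (Or.inl hx.1.ne')).mul ((h.hasDerivAt_flux x hx).pow 2)).add
    (((h.hasDerivAt_fun x hx).pow 2).const_mul L)).congr_deriv
    (by simp only [Pi.pow_apply]; push_cast; ring)

theorem energy_antitoneOn (h : FluxSystem α L y g) (hα : 0 ≤ α) :
    AntitoneOn (energy α L y g) (Ioo 0 1) := by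
  refine antitoneOn_of_hasDerivWithinAt_nonpos (f' := fun x => -α * x ^ (-α - 1) * g x ^ 2)
    (convex_Ioo 0 1) h.continuousOn_energy (fun x hx => ?_) (fun x hx => ?_) <;>
    rw [interior_Ioo] at hx
  · exact (h.hasDerivAt_energy hx).hasDerivWithinAt
  · have := Real.rpow_nonneg hx.1.le (-α - 1)
    have : 0 ≤ α * x ^ (-α - 1) * g x ^ 2 := by positivity
    linarith

theorem hasDerivAt_mul_energy (h : FluxSystem α L y g) {x : ℝ} (hx : x ∈ Ioo (0:ℝ) 1) :
    HasDerivAt (fun t => t * energy α L y g t)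
      ((1 - α) * x ^ (-α) * g x ^ 2 + L * y x ^ 2) x :=
  ((hasDerivAt_id x).mul (h.hasDerivAt_energy hx)).congr_deriv <| by
    rw [Real.rpow_sub_one hx.1.ne', energy, id]
    field_simp [hx.1.ne']
    ring

theorem mul_intervalIntegral_sq_le_energy (h : FluxSystem α L y g) (hα₀ : 0 ≤ α) (hα₁ : α ≤ 1)
    (hL : 0 ≤ L) {δ x η : ℝ} (hδ : 0 < δ) (hδx : δ ≤ x) (hxη : x ≤ η) (hη : η < 1) :
    L * ∫ t in δ..η, y t ^ 2 ≤ energy α L y g x := by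
  have hsub : Icc δ η ⊆ Ioo 0 1 := Icc_subset_Ioo hδ hη
  have hδη : δ ≤ η := hδx.trans hxη
  have hFTC : ∫ t in δ..η, L * y t ^ 2 ≤ η * energy α L y g η - δ * energy α L y g δ :=
    intervalIntegral.integral_le_sub_of_hasDeriv_right_of_le hδη
      ((continuousOn_id.mul h.continuousOn_energy).mono hsub)
      (fun t ht => (h.hasDerivAt_mul_energy (Ioo_subset_Icc_self.trans hsub ht)).hasDerivWithinAt)
      ((continuousOn_const.mul (h.continuousOn_fun.pow 2)).mono hsub).integrableOn_Icc
      (fun t ht => by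
        have := Real.rpow_nonneg (hsub (Ioo_subset_Icc_self ht)).1.le (-α)
        have : 0 ≤ (1 - α) * t ^ (-α) * g t ^ 2 := by
          have := sub_nonneg.2 hα₁
          positivity
        linarith)
  have hQη : 0 ≤ energy α L y g η := energy_nonneg hL (hδ.le.trans hδη)
  have hQδ : 0 ≤ energy α L y g δ := energy_nonneg hL hδ.le
  calc L * ∫ t in δ..η, y t ^ 2 = ∫ t in δ..η, L * y t ^ 2 :=
        (intervalIntegral.integral_const_mul L _).symm
    _ ≤ energy α L y g η := by nlinarith [mul_nonneg hδ.le hQδ]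
    _ ≤ energy α L y g x :=
        h.energy_antitoneOn hα₀ ⟨hδ.trans_le hδx, hxη.trans_lt hη⟩ ⟨hδ.trans_le hδη, hη⟩ hxη

theorem mul_setIntegral_sq_le_energy (h : FluxSystem α L y g) (hα₀ : 0 ≤ α) (hα₁ : α ≤ 1)
    (hL : 0 ≤ L) (hint : IntegrableOn (fun t => y t ^ 2) (Ioo 0 1)) {x : ℝ}
    (hx : x ∈ Ioo (0:ℝ) 1) :
    L * ∫ t in Ioo 0 1, y t ^ 2 ≤ energy α L y g x := by
  have hcover : AECover (volume.restrict (Ioo 0 1)) (𝓝[>] 0) fun δ : ℝ => Ioo δ (1 - δ) :=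
    aecover_Ioo_of_Ioo (tendsto_id.mono_left nhdsWithin_le_nhds)
      (((continuous_const.sub continuous_id).tendsto' 0 1 (sub_zero 1)).mono_left
        nhdsWithin_le_nhds)
  refine le_of_tendsto ((hcover.integral_tendsto_of_countably_generated hint).const_mul L) ?_
  filter_upwards [Ioo_mem_nhdsGT (lt_min hx.1 (sub_pos.2 hx.2))] with δ hδ
  have hδx : δ ≤ x := hδ.2.le.trans (min_le_left _ _)
  have hxη : x ≤ 1 - δ := by linarith [min_le_right x (1 - x), hδ.2]
  rw [Measure.restrict_restrict measurableSet_Ioo,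
    inter_eq_left.2 (Ioo_subset_Ioo hδ.1.le (by linarith [hδ.1])), ← integral_Ioc_eq_integral_Ioo,
    ← intervalIntegral.integral_of_le (hδx.trans hxη)]
  exact h.mul_intervalIntegral_sq_le_energy hα₀ hα₁ hL hδ.1 hδx hxη (by linarith [hδ.1])

theorem continuousOn_cutoff_mul_flux_sq (h : FluxSystem α L y g) {χ : ℝ → ℝ}
    (hχ : Continuous χ) : ContinuousOn (fun t => χ t ^ 2 * t ^ (-α) * g t ^ 2) (Ioo 0 1) :=
  ((hχ.continuousOn.pow 2).mul (continuousOn_id.rpow_const fun _ hx => Or.inl hx.1.ne')).mul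
    (h.continuousOn_flux.pow 2)

theorem continuousOn_cutoff_cross_term (h : FluxSystem α L y g) {χ : ℝ → ℝ}
    (hχ : ContDiff ℝ 1 χ) :
    ContinuousOn (fun t => L * χ t ^ 2 * y t ^ 2 - 2 * χ t * deriv χ t * g t * y t) (Ioo 0 1) :=
  ((continuousOn_const.mul (hχ.continuous.continuousOn.pow 2)).mul (h.continuousOn_fun.pow 2)).sub
    ((((continuousOn_const.mul hχ.continuous.continuousOn).mul
      (hχ.continuous_deriv le_rfl).continuousOn).mul h.continuousOn_flux).mul h.continuousOn_fun)

/-- Integration by parts against `χ² y`; the boundary terms vanish with `χ`. -/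
theorem integral_cutoff_mul_flux_sq (h : FluxSystem α L y g) {a b : ℝ} (hab : a ≤ b)
    (hsub : Icc a b ⊆ Ioo 0 1) {χ : ℝ → ℝ} (hχ : ContDiff ℝ 1 χ) (hχa : χ a = 0) (hχb : χ b = 0) :
    ∫ t in a..b, χ t ^ 2 * t ^ (-α) * g t ^ 2 =
      ∫ t in a..b, (L * χ t ^ 2 * y t ^ 2 - 2 * χ t * deriv χ t * g t * y t) := by
  rw [← uIcc_of_le hab] at hsub
  have hint₁ :=
    ((h.continuousOn_cutoff_mul_flux_sq hχ.continuous).mono hsub).intervalIntegrable (μ := volume)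
  have hint₂ := ((h.continuousOn_cutoff_cross_term hχ).mono hsub).intervalIntegrable (μ := volume)
  have hFTC := intervalIntegral.integral_eq_sub_of_hasDerivAt
    (f := fun t => g t * (χ t ^ 2 * y t)) (fun t ht => ?_) (hint₁.sub hint₂)
  · rw [intervalIntegral.integral_sub hint₁ hint₂, hχa, hχb] at hFTC
    simpa [sub_eq_zero] using hFTC
  · exact ((h.hasDerivAt_flux t (hsub ht)).mul
      ((((hχ.differentiable one_ne_zero t).hasDerivAt).pow 2).mul
      (h.hasDerivAt_fun t (hsub ht)))).congr_deriv
      (by simp only [Pi.mul_apply, Pi.pow_apply]; push_cast; ring)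

theorem integral_cutoff_mul_flux_sq_le (h : FluxSystem α L y g) (hα : 0 ≤ α) (hL : 0 ≤ L)
    {a b M : ℝ} (hab : a ≤ b) (hsub : Icc a b ⊆ Ioo 0 1) {χ : ℝ → ℝ} (hχ : ContDiff ℝ 1 χ)
    (hχa : χ a = 0) (hχb : χ b = 0) (hχ₁ : ∀ t ∈ Icc a b, χ t ^ 2 ≤ 1)
    (hM : ∀ t ∈ Icc a b, deriv χ t ^ 2 ≤ M) :
    ∫ t in a..b, χ t ^ 2 * t ^ (-α) * g t ^ 2 ≤ (2 * L + 4 * M) * ∫ t in a..b, y t ^ 2 := by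
  have hsub' := hsub
  rw [← uIcc_of_le hab] at hsub'
  have hint₁ :=
    ((h.continuousOn_cutoff_mul_flux_sq hχ.continuous).mono hsub').intervalIntegrable (μ := volume)
  have hint₂ := ((h.continuousOn_cutoff_cross_term hχ).mono hsub').intervalIntegrable (μ := volume)
  have hint₀ : IntervalIntegrable (fun t => y t ^ 2) volume a b :=
    ((h.continuousOn_fun.pow 2).mono hsub').intervalIntegrable
  have hcross : ∫ t in a..b, (L * χ t ^ 2 * y t ^ 2 - 2 * χ t * deriv χ t * g t * y t) ≤
      ∫ t in a..b, ((L + 2 * M) * y t ^ 2 + χ t ^ 2 * t ^ (-α) * g t ^ 2 / 2) :=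
    intervalIntegral.integral_mono_on hab hint₂ ((hint₀.const_mul _).add (hint₁.div_const 2))
      fun t ht => cross_term_le hα hL (Ioo_subset_Ioc_self (hsub ht)) (hχ₁ t ht) (hM t ht)
  rw [intervalIntegral.integral_add (hint₀.const_mul _) (hint₁.div_const 2),
    intervalIntegral.integral_const_mul, intervalIntegral.integral_div,
    ← h.integral_cutoff_mul_flux_sq hab hsub hχ hχa hχb] at hcross
  linarith

theorem mul_sub_le_intervalIntegral_sq (h : FluxSystem α L y g) (hα₀ : 0 ≤ α) (hα₁ : α ≤ 1)
    (hL : 0 ≤ L) (hint : IntegrableOn (fun t => y t ^ 2) (Ioo 0 1)) {a p q b M : ℝ}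
    (hap : a ≤ p) (hpq : p ≤ q) (hqb : q ≤ b) (hsub : Icc a b ⊆ Ioo 0 1) {χ : ℝ → ℝ}
    (hχ : ContDiff ℝ 1 χ) (hχa : χ a = 0) (hχb : χ b = 0) (hχ₁ : ∀ t ∈ Icc a b, χ t ^ 2 ≤ 1)
    (hM : ∀ t ∈ Icc a b, deriv χ t ^ 2 ≤ M) (hχpq : EqOn χ 1 (Icc p q)) :
    L * (∫ t in Ioo 0 1, y t ^ 2) * (q - p) ≤ (3 * L + 4 * M) * ∫ t in a..b, y t ^ 2 := by
  have hab : a ≤ b := hap.trans (hpq.trans hqb)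
  have hsub' : uIcc a b ⊆ Ioo 0 1 := uIcc_of_le hab ▸ hsub
  have hpq_sub : uIcc p q ⊆ Ioo 0 1 :=
    uIcc_of_le hpq ▸ (Icc_subset_Icc hap hqb).trans hsub
  have hint₁ := h.continuousOn_cutoff_mul_flux_sq hχ.continuous
  have hint₀ : ContinuousOn (fun t => y t ^ 2) (Ioo 0 1) := h.continuousOn_fun.pow 2
  have henergy : EqOn (energy α L y g)
      (fun t => χ t ^ 2 * t ^ (-α) * g t ^ 2 + L * y t ^ 2) (uIcc p q) := fun t ht => by
    rw [uIcc_of_le hpq] at ht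
    simp [energy, hχpq ht]
  have hflux_mono : ∫ t in p..q, χ t ^ 2 * t ^ (-α) * g t ^ 2 ≤
      ∫ t in a..b, χ t ^ 2 * t ^ (-α) * g t ^ 2 := by
    refine intervalIntegral.integral_mono_interval hap hpq hqb ?_
      ((hint₁.mono hsub').intervalIntegrable)
    filter_upwards [ae_restrict_mem measurableSet_Ioc] with t ht
    have := Real.rpow_nonneg (hsub (Ioc_subset_Icc_self ht)).1.le (-α)
    positivity
  have hsq_mono : ∫ t in p..q, y t ^ 2 ≤ ∫ t in a..b, y t ^ 2 :=
    intervalIntegral.integral_mono_interval hap hpq hqb (ae_of_all _ fun t => sq_nonneg (y t))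
      ((hint₀.mono hsub').intervalIntegrable)
  calc L * (∫ t in Ioo 0 1, y t ^ 2) * (q - p) = ∫ _ in p..q, L * ∫ t in Ioo 0 1, y t ^ 2 := by
        rw [intervalIntegral.integral_const, smul_eq_mul]; ring
    _ ≤ ∫ t in p..q, energy α L y g t :=
        intervalIntegral.integral_mono_on hpq intervalIntegrable_const
          ((h.continuousOn_energy.mono hpq_sub).intervalIntegrable)
          fun t ht => h.mul_setIntegral_sq_le_energy hα₀ hα₁ hL hint (hpq_sub (uIcc_of_le hpq ▸ ht))
    _ = (∫ t in p..q, χ t ^ 2 * t ^ (-α) * g t ^ 2) + L * ∫ t in p..q, y t ^ 2 := by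
        rw [intervalIntegral.integral_congr henergy, intervalIntegral.integral_add
          ((hint₁.mono hpq_sub).intervalIntegrable)
          (((hint₀.mono hpq_sub).intervalIntegrable).const_mul L),
          intervalIntegral.integral_const_mul]
    _ ≤ (2 * L + 4 * M) * (∫ t in a..b, y t ^ 2) + L * ∫ t in a..b, y t ^ 2 :=
        add_le_add (hflux_mono.trans
          (h.integral_cutoff_mul_flux_sq_le hα₀ hL hab hsub hχ hχa hχb hχ₁ hM))
          (mul_le_mul_of_nonneg_left hsq_mono hL)
    _ = (3 * L + 4 * M) * ∫ t in a..b, y t ^ 2 := by ring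

end FluxSystem

namespace EigenSystem

variable {α : ℝ} {lam : ℕ → ℝ} {Φ : ℕ → ℝ → ℝ}

theorem fluxSystem (hs : EigenSystem α lam Φ) (j : ℕ) :
    FluxSystem α (lam j) (Φ j) (fun x => x ^ α * deriv (Φ j) x) where
  hasDerivAt_fun x hx := (hs.diff j x (Ioo_subset_Ioc_self hx)).hasDerivAt.congr_deriv <| by
    rw [← mul_assoc, ← Real.rpow_add hx.1]
    simp
  hasDerivAt_flux x hx := hs.eigen j x hx ▸ (hs.flux_diff j x hx).hasDerivAt

theorem integral_sq (hs : EigenSystem α lam Φ) (j : ℕ) : ∫ x in Ioo 0 1, Φ j x ^ 2 = 1 := by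
  simpa [sq] using hs.orthonormal j j

theorem integrableOn_sq (hs : EigenSystem α lam Φ) (j : ℕ) :
    IntegrableOn (fun x => Φ j x ^ 2) (Ioo 0 1) :=
  Integrable.of_integral_ne_zero (by rw [hs.integral_sq j]; exact one_ne_zero)

end EigenSystem

theorem exists_cutoff {a b : ℝ} (hab : a < b) :
    ∃ χ : ℝ → ℝ, ContDiff ℝ 1 χ ∧ (∀ t, χ t ^ 2 ≤ 1) ∧ χ a = 0 ∧ χ b = 0 ∧
      EqOn χ 1 (Icc ((3 * a + b) / 4) ((a + 3 * b) / 4)) := by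
  let χ : ContDiffBump ((a + b) / 2) := ⟨(b - a) / 4, (b - a) / 2, by linarith, by linarith⟩
  refine ⟨χ, χ.contDiff, fun t => pow_le_one₀ χ.nonneg χ.le_one, χ.zero_of_le_dist ?_,
    χ.zero_of_le_dist ?_, fun t ht => χ.one_of_mem_closedBall ?_⟩
  · rw [Real.dist_eq, abs_of_nonpos (by linarith)]
    exact le_of_eq (by simp only [χ]; ring)
  · rw [Real.dist_eq, abs_of_nonneg (by linarith)]
    exact le_of_eq (by simp only [χ]; ring)
  · rw [Real.closedBall_eq_Icc]
    convert ht using 2 <;> simp only [χ] <;> ring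

/-- `L ↦ L K / (3 L + 4 M)` is nondecreasing. -/
theorem div_le_of_mul_le_mul_add {c₁ L M K I : ℝ} (hc₁ : 0 < c₁) (hL : c₁ ≤ L) (hM : 0 ≤ M)
    (hK : 0 ≤ K) (h : L * K ≤ (3 * L + 4 * M) * I) : c₁ * K / (3 * c₁ + 4 * M) ≤ I := by
  rw [div_le_iff₀ (by positivity)]
  nlinarith [mul_nonneg (mul_nonneg hM hK) (sub_nonneg.2 hL)]

/-- **Uniform lower bound for eigenfunctions in the weakly degenerate case.**
Let `0 < a < b < 1`.  There exists `c > 0`, depending only on `(a,b)`, such that for all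
`α ∈ [0,1)` and all `j`, `‖Φ_j‖²_{L²(a,b)} ≥ c`; in particular
`‖Φ_j‖²_{L²(a,b)} ≥ (c/2)(2-α)`. -/
theorem eigenfunction_lower_bound
    (a b : ℝ) (ha : 0 < a) (hab : a < b) (hb : b < 1)
    (lam : ℝ → ℕ → ℝ) (Φ : ℝ → ℕ → ℝ → ℝ)
    (hsys : ∀ α ∈ Ico (0:ℝ) 1, EigenSystem α (lam α) (Φ α))
    (c₁ : ℝ) (hc₁ : 0 < c₁)
    (hlam1 : ∀ α ∈ Ico (0:ℝ) 1, c₁ ≤ lam α 0) :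
    ∃ c > (0:ℝ), ∀ α ∈ Ico (0:ℝ) 1, ∀ j : ℕ,
      c ≤ (∫ x in Ioo a b, (Φ α j x) ^ 2) ∧
      c / 2 * (2 - α) ≤ ∫ x in Ioo a b, (Φ α j x) ^ 2 := by
  obtain ⟨χ, hχ, hχ₁, hχa, hχb, hχpq⟩ := exists_cutoff hab
  obtain ⟨M, hM⟩ := isCompact_Icc.exists_bound_of_continuousOn
    ((hχ.continuous_deriv le_rfl).pow 2).continuousOn (s := Icc a b)
  have hM' : ∀ t ∈ Icc a b, deriv χ t ^ 2 ≤ M :=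
    fun t ht => (le_abs_self _).trans (hM t ht)
  have hM₀ : 0 ≤ M := (sq_nonneg _).trans (hM' a (left_mem_Icc.2 hab.le))
  have hc₀ : 0 < c₁ * ((b - a) / 2) / (3 * c₁ + 4 * M) :=
    div_pos (mul_pos hc₁ (by linarith)) (by linarith)
  refine ⟨_, hc₀, fun α hα j => ?_⟩
  have hs := hsys α hα
  have hL : c₁ ≤ lam α j := (hlam1 α hα).trans (hs.mono (Nat.zero_le j))
  have key := (hs.fluxSystem j).mul_sub_le_intervalIntegral_sq hα.1 hα.2.le (hc₁.le.trans hL)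
    (hs.integrableOn_sq j) (by linarith) (by linarith) (by linarith) (Icc_subset_Ioo ha hb)
    hχ hχa hχb (fun t _ => hχ₁ t) hM' hχpq
  rw [hs.integral_sq j, intervalIntegral.integral_of_le hab.le,
    integral_Ioc_eq_integral_Ioo] at key
  have hc := div_le_of_mul_le_mul_add (K := (b - a) / 2) hc₁ hL hM₀ (by linarith)
    (by convert key using 1; ring)
  exact ⟨hc, by nlinarith [hα.1]⟩
end
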